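/- arXiv:1408.3848 — 4 statements merged into one kernel-verified Lean document; each statement's English description precedes it below -/
import Mathlib

section
/- Let c_B > 0, c_I > 0, t_B > 0, t_I > 0 with c_B ≤ c_I, and let ξ : ℝ → ℝ be continuous and satisfy (3/4)·c_B·(t - t₀ - t_B) ≤ ξ(t) - ξ(t₀) ≤ (5/4)·c_I·(t - t₀ + t_I) for all t₀ ∈ ℝ and t ≥ t₀. Fix C₀ > (5/4)·c_I·t_I and define η(t) = ξ(t₀) + C₀ + (c_B/2)·(t - t₀) for t ≥ t₀. Then the first hitting time T₁ = min{ t ≥ t₀ : ξ(t) = η(t) } exists, and T₁ - t₀ ∈ [T_min, T_max] where T_min = (4C₀ - 5c_I t_I)/(5c_I - c_B) and T_max = (4C₀ + 3c_B t_B)/c_B. -/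
/-!
By the intermediate value theorem `ξ` meets the line `η` on `[t₀, t₀ + T_max]`: at `t₀` the line
lies `C₀ > 0` above `ξ`, while the lower propagation bound makes `ξ` catch up with `η` by
`t₀ + T_max`. The set of hitting times is closed, so it has a least element `T₁`. At `T₁` the upper
propagation bound gives `C₀ + (c_B/2)(T₁ - t₀) ≤ (5/4) c_I (T₁ - t₀ + t_I)`, which yields `T_min`.
-/

theorem exists_isLeast_eq_of_le_of_ge {α δ : Type*} [ConditionallyCompleteLinearOrder α]
    [TopologicalSpace α] [OrderTopology α] [DenselyOrdered α] [LinearOrder δ]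
    [TopologicalSpace δ] [OrderClosedTopology δ] {f g : α → δ} (hf : Continuous f)
    (hg : Continuous g) {a b : α} (hab : a ≤ b) (ha : f a ≤ g a) (hb : g b ≤ f b) :
    ∃ T, IsLeast {t | a ≤ t ∧ f t = g t} T ∧ T ≤ b := by
  obtain ⟨c, ⟨hac, hcb⟩, hfgc⟩ := isPreconnected_Icc.intermediate_value₂
    (Set.left_mem_Icc.2 hab) (Set.right_mem_Icc.2 hab) hf.continuousOn hg.continuousOn ha hb
  have hclosed : IsClosed {t | a ≤ t ∧ f t = g t} :=
    (isClosed_le continuous_const continuous_id).inter (isClosed_eq hf hg)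
  have hleast := hclosed.isLeast_csInf ⟨c, hac, hfgc⟩ ⟨a, fun _ ht => ht.1⟩
  exact ⟨_, hleast, (hleast.2 ⟨hac, hfgc⟩).trans hcb⟩

theorem stmt_0_general (cB cI tB tI C₀ t₀ : ℝ) (ξ : ℝ → ℝ)
    (hcB : 0 < cB)
    (hcBI : cB ≤ cI) (hξ : Continuous ξ)
    (hlow : ∀ s t : ℝ, s ≤ t → 3/4 * cB * (t - s - tB) ≤ ξ t - ξ s)
    (hup : ∀ s t : ℝ, s ≤ t → ξ t - ξ s ≤ 5/4 * cI * (t - s + tI))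
    (hC₀ : 5/4 * cI * tI < C₀) :
    ∃ T₁ : ℝ,
      IsLeast {t : ℝ | t₀ ≤ t ∧ ξ t = ξ t₀ + C₀ + cB / 2 * (t - t₀)} T₁ ∧
      (4 * C₀ - 5 * cI * tI) / (5 * cI - cB) ≤ T₁ - t₀ ∧
      T₁ - t₀ ≤ (4 * C₀ + 3 * cB * tB) / cB := by
  -- the two propagation bounds at `s = t` give `0 ≤ cB * tB` and `0 ≤ cI * tI`
  have hBB : 0 ≤ cB * tB := by linarith [hlow t₀ t₀ le_rfl]
  have hII : 0 ≤ cI * tI := by linarith [hup t₀ t₀ le_rfl]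
  set Tmax := (4 * C₀ + 3 * cB * tB) / cB
  have hTmax : cB * Tmax = 4 * C₀ + 3 * cB * tB := mul_div_cancel₀ _ hcB.ne'
  have hTmax_nonneg : 0 ≤ Tmax := by nlinarith
  have hcatch : ξ t₀ + C₀ + cB / 2 * (t₀ + Tmax - t₀) ≤ ξ (t₀ + Tmax) := by
    linarith [hlow t₀ (t₀ + Tmax) (by linarith)]
  obtain ⟨T₁, hleast, hT₁⟩ := exists_isLeast_eq_of_le_of_ge hξ
    (g := fun t => ξ t₀ + C₀ + cB / 2 * (t - t₀)) (by fun_prop)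
    (le_add_of_nonneg_right hTmax_nonneg) (by linarith) hcatch
  refine ⟨T₁, hleast, ?_, by linarith⟩
  obtain ⟨ht₀T₁, hhit⟩ := hleast.1
  rw [div_le_iff₀ (by linarith)]
  nlinarith [hup t₀ T₁ ht₀T₁]

/-- Existence and bounds for the first hitting time of the interface location
against the line `η(t) = ξ(t₀) + C₀ + (c_B/2)(t - t₀)`. -/
theorem stmt_0 (cB cI tB tI C₀ t₀ : ℝ) (ξ : ℝ → ℝ)
    (hcB : 0 < cB) (hcI : 0 < cI) (htB : 0 < tB) (htI : 0 < tI)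
    (hcBI : cB ≤ cI) (hξ : Continuous ξ)
    (hlow : ∀ s t : ℝ, s ≤ t → 3/4 * cB * (t - s - tB) ≤ ξ t - ξ s)
    (hup : ∀ s t : ℝ, s ≤ t → ξ t - ξ s ≤ 5/4 * cI * (t - s + tI))
    (hC₀ : 5/4 * cI * tI < C₀) :
    ∃ T₁ : ℝ,
      IsLeast {t : ℝ | t₀ ≤ t ∧ ξ t = ξ t₀ + C₀ + cB / 2 * (t - t₀)} T₁ ∧
      (4 * C₀ - 5 * cI * tI) / (5 * cI - cB) ≤ T₁ - t₀ ∧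
      T₁ - t₀ ≤ (4 * C₀ + 3 * cB * tB) / cB :=
  stmt_0_general cB cI tB tI C₀ t₀ ξ hcB hcBI hξ hlow hup hC₀
end

section
/- Let c_B > 0, c_I > 0, t_B > 0, t_I > 0, and let ξ : ℝ → ℝ be continuous and satisfy (3/4)·c_B·(t - s - t_B) ≤ ξ(t) - ξ(s) ≤ (5/4)·c_I·(t - s + t_I) for all s ∈ ℝ and all t ≥ s. Fix C₀ > (5/4)·c_I·t_I and t₀ ∈ ℝ. Define recursively T₀ = t₀ and, for n ≥ 1, T_n = min{ t ≥ T_{n-1} : ξ(t) = ξ(T_{n-1}) + C₀ + (c_B/2)(t - T_{n-1}) }. Then for every n ≥ 1 and every t ∈ [T_{n-1}, T_n], one has 0 ≤ ξ(T_{n-1}) + C₀ + (c_B/2)(t - T_{n-1}) - ξ(t) ≤ C₀ + (3/4)·c_B·t_B. -/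
/-- Along the recursively defined hitting times, the gap between the
piecewise-linear envelope of slope `c_B/2` and `ξ` stays in `[0, C₀ + (3/4) c_B t_B]`. -/
theorem stmt_1 (cB cI tB tI C₀ t₀ : ℝ) (ξ : ℝ → ℝ) (T : ℕ → ℝ)
    (hcB : 0 < cB) (hcI : 0 < cI) (htB : 0 < tB) (htI : 0 < tI)
    (hξ : Continuous ξ)
    (hlow : ∀ s t : ℝ, s ≤ t → 3/4 * cB * (t - s - tB) ≤ ξ t - ξ s)
    (hup : ∀ s t : ℝ, s ≤ t → ξ t - ξ s ≤ 5/4 * cI * (t - s + tI))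
    (hC₀ : 5/4 * cI * tI < C₀)
    (hT0 : T 0 = t₀)
    (hT : ∀ n : ℕ,
      IsLeast {t : ℝ | T n ≤ t ∧ ξ t = ξ (T n) + C₀ + cB / 2 * (t - T n)} (T (n + 1))) :
    ∀ n : ℕ, ∀ t : ℝ, T n ≤ t → t ≤ T (n + 1) →
      0 ≤ ξ (T n) + C₀ + cB / 2 * (t - T n) - ξ t ∧
      ξ (T n) + C₀ + cB / 2 * (t - T n) - ξ t ≤ C₀ + 3/4 * cB * tB := by
  intro n t ht1 ht2
  have hC₀pos : 0 < C₀ := lt_trans (by positivity) hC₀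
  constructor
  · by_contra h
    push_neg at h
    set f : ℝ → ℝ := fun u => ξ (T n) + C₀ + cB / 2 * (u - T n) - ξ u with hf
    have hfc : ContinuousOn f (Set.Icc (T n) t) := by
      fun_prop
    have hft : f t < 0 := h
    have hfTn : f (T n) = C₀ := by simp [hf]
    have : (0:ℝ) ∈ Set.Icc (f t) (f (T n)) := ⟨le_of_lt hft, by rw [hfTn]; exact le_of_lt hC₀pos⟩
    obtain ⟨u, hu, hfu⟩ := intermediate_value_Icc' ht1 hfc this
    have humem : u ∈ {t : ℝ | T n ≤ t ∧ ξ t = ξ (T n) + C₀ + cB / 2 * (t - T n)} := by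
      refine ⟨hu.1, ?_⟩
      have : ξ (T n) + C₀ + cB / 2 * (u - T n) - ξ u = 0 := hfu
      linarith
    have hle : T (n + 1) ≤ u := (hT n).2 humem
    have hut : u = t := le_antisymm hu.2 (ht2.trans hle)
    rw [hut] at hfu
    linarith
  · have := hlow (T n) t ht1
    nlinarith [hlow (T n) t ht1]
end

section
/- Let c_B > 0, c_I > 0, t_B > 0, t_I > 0, and let ξ : ℝ → ℝ be continuous and satisfy (3/4)·c_B·(t - s - t_B) ≤ ξ(t) - ξ(s) ≤ (5/4)·c_I·(t - s + t_I) for all s ∈ ℝ and t ≥ s. Then there exist constants C_max > 0 and d_max > 0 and a continuously differentiable function ξ̃ : ℝ → ℝ such that c_B/2 ≤ ξ̃'(t) ≤ C_max and 0 ≤ ξ̃(t) - ξ(t) ≤ d_max for all t ∈ ℝ. -/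
/-!
Take for `ξ̃` the moving average of `ξ` over a window of length `T = 3 t_B`, shifted up by
`(3/4) c_B t_B`. Its derivative is the difference quotient `(ξ(t + T) - ξ(t)) / T`, which the
two growth estimates bound between `c_B / 2` (this is what fixes `T = 3 t_B`) and
`(5/4) c_I (T + t_I) / T`. On the window, `ξ(u) - ξ(t)` lies between `-(3/4) c_B t_B` and
`(5/4) c_I (T + t_I)`, so the shifted average stays above `ξ` by a bounded amount.
-/

open Set

noncomputable section

def slidingAverage (T : ℝ) (f : ℝ → ℝ) (t : ℝ) : ℝ :=
  T⁻¹ * ∫ u in t..t + T, f u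

variable {f : ℝ → ℝ}

theorem hasDerivAt_slidingAverage (hf : Continuous f) (T t : ℝ) :
    HasDerivAt (slidingAverage T f) ((f (t + T) - f t) / T) t := by
  have hsplit :
      slidingAverage T f = fun s => T⁻¹ * ((∫ u in 0..s + T, f u) - ∫ u in 0..s, f u) := by
    ext s
    rw [slidingAverage, intervalIntegral.integral_interval_sub_left
      (hf.intervalIntegrable _ _) (hf.intervalIntegrable _ _)]
  have hright : HasDerivAt (fun s => ∫ u in 0..s + T, f u) (f (t + T)) t :=
    .comp_add_const t T (hf.integral_hasStrictDerivAt 0 (t + T)).hasDerivAt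
  rw [hsplit, div_eq_inv_mul]
  exact (hright.sub (hf.integral_hasStrictDerivAt 0 t).hasDerivAt).const_mul T⁻¹

theorem contDiff_slidingAverage (hf : Continuous f) (T : ℝ) :
    ContDiff ℝ 1 (slidingAverage T f) := by
  rw [contDiff_one_iff_deriv]
  refine ⟨fun t => (hasDerivAt_slidingAverage hf T t).differentiableAt, ?_⟩
  rw [funext fun t => (hasDerivAt_slidingAverage hf T t).deriv]
  fun_prop

theorem slidingAverage_sub_mem_Icc {T t c a b : ℝ} (hf : Continuous f) (hT : 0 < T)
    (hbound : ∀ u ∈ Icc t (t + T), f u - c ∈ Icc a b) :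
    slidingAverage T f t - c ∈ Icc a b := by
  have hle : t ≤ t + T := by linarith
  have hmean : slidingAverage T f t - c = T⁻¹ * ∫ u in t..t + T, (f u - c) := by
    rw [slidingAverage, intervalIntegral.integral_sub (hf.intervalIntegrable _ _)
      intervalIntegrable_const, intervalIntegral.integral_const, smul_eq_mul, add_sub_cancel_left,
      mul_sub, inv_mul_cancel_left₀ hT.ne']
  have hcont : Continuous fun u => f u - c := by fun_prop
  have hlower : ∫ _ in t..t + T, a ≤ ∫ u in t..t + T, (f u - c) :=
    intervalIntegral.integral_mono_on hle intervalIntegrable_const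
      (hcont.intervalIntegrable _ _) fun u hu => (hbound u hu).1
  have hupper : ∫ u in t..t + T, (f u - c) ≤ ∫ _ in t..t + T, b :=
    intervalIntegral.integral_mono_on hle (hcont.intervalIntegrable _ _)
      intervalIntegrable_const fun u hu => (hbound u hu).2
  simp only [intervalIntegral.integral_const, smul_eq_mul, add_sub_cancel_left] at hlower hupper
  rw [hmean]
  constructor
  · rw [le_inv_mul_iff₀ hT]; linarith
  · rw [inv_mul_le_iff₀ hT]; linarith

end

/-- Existence of a `C¹` modified interface location with derivative between
`c_B/2` and `C_max`, staying within distance `d_max` above `ξ`. -/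
theorem stmt_2 (cB cI tB tI : ℝ) (ξ : ℝ → ℝ)
    (hcB : 0 < cB) (hcI : 0 < cI) (htB : 0 < tB) (htI : 0 < tI)
    (hξ : Continuous ξ)
    (hlow : ∀ s t : ℝ, s ≤ t → 3/4 * cB * (t - s - tB) ≤ ξ t - ξ s)
    (hup : ∀ s t : ℝ, s ≤ t → ξ t - ξ s ≤ 5/4 * cI * (t - s + tI)) :
    ∃ (Cmax dmax : ℝ) (ξtil : ℝ → ℝ), 0 < Cmax ∧ 0 < dmax ∧
      ContDiff ℝ 1 ξtil ∧
      (∀ t : ℝ, cB / 2 ≤ deriv ξtil t ∧ deriv ξtil t ≤ Cmax) ∧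
      (∀ t : ℝ, 0 ≤ ξtil t - ξ t ∧ ξtil t - ξ t ≤ dmax) := by
  set T := 3 * tB with hT_def
  have hT : 0 < T := by positivity
  refine ⟨5/4 * cI * (T + tI) / T, 3/4 * cB * tB + 5/4 * cI * (T + tI),
    fun t => slidingAverage T ξ t + 3/4 * cB * tB, by positivity, by positivity,
    (contDiff_slidingAverage hξ T).add contDiff_const, fun t => ?_, fun t => ?_⟩
  · have hstep : t ≤ t + T := by linarith
    have hlow_step := hlow t (t + T) hstep
    have hup_step := hup t (t + T) hstep
    rw [((hasDerivAt_slidingAverage hξ T t).add_const _).deriv, le_div_iff₀ hT,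
      div_le_div_iff_of_pos_right hT]
    constructor <;> linarith
  · have hwindow :
        ∀ u ∈ Icc t (t + T), ξ u - ξ t ∈ Icc (-(3/4 * cB * tB)) (5/4 * cI * (T + tI)) :=
      fun u hu => ⟨by nlinarith [hlow t u hu.1, hu.1], by nlinarith [hup t u hu.1, hu.2]⟩
    have havg := slidingAverage_sub_mem_Icc hξ hT hwindow
    constructor <;> linarith [havg.1, havg.2]
end

section
/- Let θ ∈ (0,1), c > 0, and let v̂ : ℝ × [0,∞) → ℝ be a bounded C^{1,2} function satisfying v̂_t = v̂_xx + c(t)·v̂_x for x ≥ 0, where c : ℝ → ℝ is continuous with c(t) ≥ c₀/2 > 0 for all t, together with v̂(t,0) ≤ 1 for all t ∈ ℝ and v̂(t,x) → 0 as x → ∞ uniformly in t ∈ ℝ. Assume additionally that v̂_x is bounded on ℝ × [0,∞) and that c is Lipschitz with bounded derivative. Then v̂(t,x) ≤ e^{-(c₀/2)·x} for all x ≥ 0 and t ∈ ℝ. -/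
/-!
Fix `(t, x)` and `ε > 0`, choose `X ≥ x` beyond which `v ≤ ε/3`, and compare `v` on the
rectangle `[t - T, t] × [0, X]` with the barrier
`ε/3 + δ (s - t + T) + B e^{(κ/2)(X - y) - (κ²/4)(s - t + T)} + e^{-κ y}`, `κ = c₀/2`.
Because `c ≥ κ` it is a strict supersolution of `w_s = w_yy + c w_y`, and it dominates `v` on the
parabolic boundary: through the bound `B` at the initial time, `v ≤ 1` at `y = 0` and `v ≤ ε/3` at
`y = X`. The weak maximum principle (a minimum over the compact rectangle, which exists since a
bounded `v_x` makes `v` jointly continuous) gives `v < barrier`; then `T → ∞`, `δ → 0`, `ε → 0`.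
-/

open Set Filter Topology Real

theorem IsMinOn.hasDerivAt_nonpos_of_Icc {f : ℝ → ℝ} {f' a t : ℝ} (hmin : IsMinOn f (Icc a t) t)
    (hat : a < t) (hf : HasDerivAt f f' t) : f' ≤ 0 := by
  have hdir : a - t ∈ posTangentConeAt (Icc a t) t :=
    sub_mem_posTangentConeAt_of_segment_subset ((segment_symm ℝ t a).trans_subset
      (segment_subset_Icc hat.le))
  have := hmin.localize.hasFDerivWithinAt_nonneg hf.hasFDerivAt.hasFDerivWithinAt hdir
  rw [ContinuousLinearMap.toSpanSingleton_apply, smul_eq_mul] at this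
  nlinarith

theorem IsLocalMin.second_deriv_nonneg {f f' : ℝ → ℝ} {x f'' : ℝ} (hmin : IsLocalMin f x)
    (hf : ∀ᶠ y in 𝓝 x, HasDerivAt f (f' y) y) (hf' : HasDerivAt f' f'' x) : 0 ≤ f'' := by
  by_contra! hneg
  have hzero : f' x = 0 := hmin.hasDerivAt_eq_zero hf.self_of_nhds
  have hdecr : ∀ᶠ y in 𝓝[>] x, f' y < 0 := by
    have hslope := (hasDerivAt_iff_tendsto_slope.1 hf').mono_left (nhdsGT_le_nhdsNE x)
    filter_upwards [hslope.eventually (eventually_lt_nhds hneg), self_mem_nhdsWithin]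
      with y hy hxy
    rw [slope_def_field, hzero, sub_zero] at hy
    exact ((div_neg_iff.1 hy).resolve_left fun h => by linarith [h.2, mem_Ioi.1 hxy]).1
  obtain ⟨u, hxu, hu⟩ := mem_nhdsGT_iff_exists_Ioo_subset.1
    (hdecr.and (nhdsWithin_le_nhds (hf.and hmin)))
  set y := (x + u) / 2
  have hxy : x < y := by simp only [y]; linarith [mem_Ioi.1 hxu]
  have hyu : y < u := by simp only [y]; linarith [mem_Ioi.1 hxu]
  have hcont : ContinuousOn f (Icc x y) := fun z hz => by
    rcases hz.1.eq_or_lt with rfl | hxz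
    · exact hf.self_of_nhds.continuousAt.continuousWithinAt
    · exact (hu ⟨hxz, hz.2.trans_lt hyu⟩).2.1.continuousAt.continuousWithinAt
  obtain ⟨ξ, hξ, hξeq⟩ := exists_hasDerivAt_eq_slope f f' hxy hcont
    fun z hz => (hu ⟨hz.1, hz.2.trans hyu⟩).2.1
  have hξneg := (hu ⟨hξ.1, hξ.2.trans hyu⟩).1
  have hfy : f x ≤ f y := (hu ⟨hxy, hyu⟩).2.2
  rw [hξeq] at hξneg
  exact hξneg.not_ge (div_nonneg (sub_nonneg.2 hfy) (sub_pos.2 hxy).le)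

theorem pos_of_strict_supersolution_Icc {a b l r : ℝ} {c : ℝ → ℝ → ℝ}
    {U Ut Ux Uxx : ℝ → ℝ → ℝ} (hab : a ≤ b) (hlr : l ≤ r)
    (hcont : ContinuousOn (Function.uncurry U) (Icc a b ×ˢ Icc l r))
    (hUt : ∀ t ∈ Ioc a b, ∀ x ∈ Ioo l r, HasDerivAt (U · x) (Ut t x) t)
    (hUx : ∀ t ∈ Ioc a b, ∀ x ∈ Ioo l r, HasDerivAt (U t) (Ux t x) x)
    (hUxx : ∀ t ∈ Ioc a b, ∀ x ∈ Ioo l r, HasDerivAt (Ux t) (Uxx t x) x)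
    (hsuper : ∀ t ∈ Ioc a b, ∀ x ∈ Ioo l r, 0 < Ut t x - Uxx t x - c t x * Ux t x)
    (hinit : ∀ x ∈ Icc l r, 0 < U a x)
    (hleft : ∀ t ∈ Icc a b, 0 < U t l) (hright : ∀ t ∈ Icc a b, 0 < U t r) :
    ∀ t ∈ Icc a b, ∀ x ∈ Icc l r, 0 < U t x := by
  obtain ⟨⟨s, y⟩, ⟨hs : s ∈ Icc a b, hy : y ∈ Icc l r⟩, hmin⟩ :=
    (isCompact_Icc.prod isCompact_Icc).exists_isMinOn
      ⟨(a, l), left_mem_Icc.2 hab, left_mem_Icc.2 hlr⟩ hcont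
  suffices hpos : 0 < U s y from
    fun t ht x hx => hpos.trans_le (hmin (mk_mem_prod ht hx))
  by_contra! hneg
  have has : a < s := hs.1.lt_of_ne <| by rintro rfl; exact (hinit y hy).not_ge hneg
  have hly : l < y := hy.1.lt_of_ne <| by rintro rfl; exact (hleft s hs).not_ge hneg
  have hyr : y < r := hy.2.lt_of_ne' <| by rintro rfl; exact (hright s hs).not_ge hneg
  have hs' : s ∈ Ioc a b := ⟨has, hs.2⟩
  have hmin_x : IsLocalMin (U s) y :=
    Filter.mem_of_superset (Icc_mem_nhds hly hyr) fun x hx => hmin (mk_mem_prod hs hx)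
  have hUx0 : Ux s y = 0 := hmin_x.hasDerivAt_eq_zero (hUx s hs' y ⟨hly, hyr⟩)
  have hUt0 : Ut s y ≤ 0 :=
    IsMinOn.hasDerivAt_nonpos_of_Icc (f := (U · y))
      (fun t ht => hmin (mk_mem_prod ⟨ht.1, ht.2.trans hs.2⟩ hy)) has (hUt s hs' y ⟨hly, hyr⟩)
  have hUxx0 : 0 ≤ Uxx s y :=
    hmin_x.second_deriv_nonneg (Filter.mem_of_superset (Ioo_mem_nhds hly hyr) (hUx s hs'))
      (hUxx s hs' y ⟨hly, hyr⟩)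
  have := hsuper s hs' y ⟨hly, hyr⟩
  rw [hUx0, mul_zero] at this
  linarith

theorem continuousOn_uncurry_of_hasDerivAt_of_bounded {v vt vx : ℝ → ℝ → ℝ} {C : NNReal}
    (hvt : ∀ t x : ℝ, 0 ≤ x → HasDerivAt (fun τ => v τ x) (vt t x) t)
    (hvx : ∀ t x : ℝ, 0 ≤ x → HasDerivAt (fun y => v t y) (vx t x) x)
    (hC : ∀ t x : ℝ, 0 ≤ x → |vx t x| ≤ C) :
    ContinuousOn (Function.uncurry v) (univ ×ˢ Ici 0) :=
  continuousOn_prod_of_continuousOn_lipschitzOnWith' _ C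
    (fun t _ => (convex_Ici 0).lipschitzOnWith_of_nnnorm_hasDerivWithin_le
      (fun x hx => (hvx t x hx).hasDerivWithinAt)
      fun x hx => by rw [← NNReal.coe_le_coe, coe_nnnorm]; exact hC t x hx)
    fun x hx t _ => (hvt t x hx).continuousAt.continuousWithinAt

theorem lt_drift_heat_barrier {v vt vx vxx : ℝ → ℝ → ℝ} {c : ℝ → ℝ} {B ε δ κ a b X : ℝ}
    (hvt : ∀ t x : ℝ, 0 ≤ x → HasDerivAt (fun τ => v τ x) (vt t x) t)
    (hvx : ∀ t x : ℝ, 0 ≤ x → HasDerivAt (fun y => v t y) (vx t x) x)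
    (hvxx : ∀ t x : ℝ, 0 ≤ x → HasDerivAt (fun y => vx t y) (vxx t x) x)
    (hpde : ∀ t x : ℝ, 0 ≤ x → vt t x = vxx t x + c t * vx t x)
    (hab : a ≤ b) (hX : 0 ≤ X)
    (hcont : ContinuousOn (Function.uncurry v) (Icc a b ×ˢ Icc 0 X))
    (hκ : 0 ≤ κ) (hκc : ∀ t, κ ≤ c t) (hε : 0 < ε) (hδ : 0 < δ) (hB : 0 ≤ B)
    (hinit : ∀ x ∈ Icc 0 X, v a x ≤ B) (hleft : ∀ t ∈ Icc a b, v t 0 ≤ 1)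
    (hright : ∀ t ∈ Icc a b, v t X ≤ ε) :
    ∀ t ∈ Icc a b, ∀ x ∈ Icc 0 X,
      v t x <
        ε + δ * (t - a) + B * exp (κ / 2 * (X - x) - κ ^ 2 / 4 * (t - a)) + exp (-κ * x) := by
  set E : ℝ → ℝ → ℝ := fun t x => exp (κ / 2 * (X - x) - κ ^ 2 / 4 * (t - a))
  have hEt : ∀ t x, HasDerivAt (E · x) (-(κ ^ 2 / 4) * E t x) t := fun t x => by
    have := (((hasDerivAt_id' t).sub_const a).const_mul (κ ^ 2 / 4)).const_sub (κ / 2 * (X - x))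
    exact this.exp.congr_deriv (by simp only [E]; ring)
  have hEx : ∀ t x, HasDerivAt (E t) (-(κ / 2) * E t x) x := fun t x => by
    have := ((((hasDerivAt_id' x).const_sub X).const_mul (κ / 2)).sub_const (κ ^ 2 / 4 * (t - a)))
    exact this.exp.congr_deriv (by simp only [E]; ring)
  have hexp : ∀ x, HasDerivAt (fun y => exp (-κ * y)) (-κ * exp (-κ * x)) x := fun x =>
    ((hasDerivAt_id' x).const_mul (-κ)).exp.congr_deriv (by simp only [mul_one]; ring)
  refine fun t ht x hx => sub_pos.1 <| pos_of_strict_supersolution_Icc (c := fun t _ => c t)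
    (U := fun t x => ε + δ * (t - a) + B * E t x + exp (-κ * x) - v t x)
    (Ut := fun t x => δ - κ ^ 2 / 4 * B * E t x - vt t x)
    (Ux := fun t x => -(κ / 2) * B * E t x - κ * exp (-κ * x) - vx t x)
    (Uxx := fun t x => κ ^ 2 / 4 * B * E t x + κ ^ 2 * exp (-κ * x) - vxx t x)
    hab hX ?_ ?_ ?_ ?_ ?_ ?_ ?_ ?_ t ht x hx
  · exact (Continuous.continuousOn (f := fun p : ℝ × ℝ =>
      ε + δ * (p.1 - a) + B * E p.1 p.2 + exp (-κ * p.2)) (by fun_prop)).sub hcont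
  · intro t _ x hx
    exact (((((hasDerivAt_id' t).sub_const a).const_mul δ).const_add ε).add
      ((hEt t x).const_mul B) |>.add_const _ |>.sub (hvt t x hx.1.le)).congr_deriv (by ring)
  · intro t _ x hx
    exact ((((hasDerivAt_const x (ε + δ * (t - a))).add ((hEx t x).const_mul B)).add
      (hexp x)).sub (hvx t x hx.1.le)).congr_deriv (by ring)
  · intro t _ x hx
    exact ((((hEx t x).const_mul (-(κ / 2) * B)).sub ((hexp x).const_mul κ)).sub
      (hvxx t x hx.1.le)).congr_deriv (by ring)
  · intro t _ x hx
    have hc := sub_nonneg.2 (hκc t)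
    have hEterm : 0 ≤ κ / 2 * (c t - κ) * B * E t x :=
      mul_nonneg (mul_nonneg (mul_nonneg (by positivity) hc) hB) (exp_pos _).le
    have hexpterm : 0 ≤ κ * (c t - κ) * exp (-κ * x) := by positivity
    calc 0 < δ + κ / 2 * (c t - κ) * B * E t x + κ * (c t - κ) * exp (-κ * x) := by positivity
      _ = _ := by rw [hpde t x hx.1.le]; ring
  · intro x hx
    have hEa : 1 ≤ E a x := one_le_exp (by nlinarith [hx.2])
    have := hinit x hx
    nlinarith [exp_pos (-κ * x)]
  · intro t ht
    have := hleft t ht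
    have : 0 ≤ δ * (t - a) := mul_nonneg hδ.le (sub_nonneg.2 ht.1)
    have : 0 ≤ B * E t 0 := mul_nonneg hB (exp_pos _).le
    simp only [mul_zero, exp_zero]
    linarith
  · intro t ht
    have := hright t ht
    have : 0 ≤ δ * (t - a) := mul_nonneg hδ.le (sub_nonneg.2 ht.1)
    have : 0 ≤ B * E t X := mul_nonneg hB (exp_pos _).le
    linarith [exp_pos (-κ * X)]

theorem stmt_17_general (c₀ : ℝ) (hc₀ : 0 < c₀)
    (v : ℝ → ℝ → ℝ) (vt vx vxx : ℝ → ℝ → ℝ) (c : ℝ → ℝ)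
    (hclow : ∀ t : ℝ, c₀ / 2 ≤ c t)
    (hvt : ∀ t x : ℝ, 0 ≤ x → HasDerivAt (fun τ => v τ x) (vt t x) t)
    (hvx : ∀ t x : ℝ, 0 ≤ x → HasDerivAt (fun y => v t y) (vx t x) x)
    (hvxx : ∀ t x : ℝ, 0 ≤ x → HasDerivAt (fun y => vx t y) (vxx t x) x)
    (hpde : ∀ t x : ℝ, 0 ≤ x → vt t x = vxx t x + c t * vx t x)
    (hbdd : ∃ B : ℝ, ∀ t x : ℝ, 0 ≤ x → |v t x| ≤ B)
    (hvxbdd : ∃ B' : ℝ, ∀ t x : ℝ, 0 ≤ x → |vx t x| ≤ B')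
    (hbc : ∀ t : ℝ, v t 0 ≤ 1)
    (hdecay : ∀ ε : ℝ, 0 < ε → ∃ M : ℝ, ∀ t x : ℝ, M ≤ x → |v t x| ≤ ε) :
    ∀ t x : ℝ, 0 ≤ x → v t x ≤ Real.exp (-(c₀ / 2) * x) := by
  obtain ⟨B, hB⟩ := hbdd
  obtain ⟨C, hC⟩ := hvxbdd
  have hcont := continuousOn_uncurry_of_hasDerivAt_of_bounded (C := C.toNNReal) hvt hvx
    fun t x hx => (hC t x hx).trans C.le_coe_toNNReal
  have hB₀ : 0 ≤ B := (abs_nonneg _).trans (hB 0 0 le_rfl)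
  intro t x hx
  refine le_of_forall_pos_lt_add fun ε hε => ?_
  obtain ⟨M, hM⟩ := hdecay (ε / 3) (by positivity)
  set X := max x M
  obtain ⟨T, hTε, hT⟩ : ∃ T, B * exp (c₀ / 4 * X + -(c₀ ^ 2 / 16) * T) < ε / 3 ∧ 0 < T := by
    have : Tendsto (fun T => B * exp (c₀ / 4 * X + -(c₀ ^ 2 / 16) * T)) atTop (𝓝 (B * 0)) :=
      ((tendsto_exp_atBot.comp (tendsto_atBot_add_const_left _ _
        (tendsto_id.const_mul_atTop_of_neg (by nlinarith)))).const_mul B)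
    exact ((this.eventually (gt_mem_nhds (by linarith))).and (eventually_gt_atTop 0)).exists
  have hbarrier := lt_drift_heat_barrier (κ := c₀ / 2) (a := t - T) (b := t)
    (δ := ε / (3 * T)) hvt hvx hvxx hpde (by linarith) (le_max_of_le_left hx)
    (hcont.mono fun p hp => ⟨trivial, hp.2.1⟩) (by positivity) hclow (by positivity)
    (by positivity) hB₀ (fun x hx => (abs_le.1 (hB _ _ hx.1)).2) (fun t _ => hbc t)
    (fun t _ => (abs_le.1 (hM t X (le_max_right _ _))).2) t ⟨by linarith, le_rfl⟩
    x ⟨hx, le_max_left _ _⟩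
  have hdecayT : B * exp (c₀ / 2 / 2 * (X - x) - (c₀ / 2) ^ 2 / 4 * (t - (t - T))) ≤
      B * exp (c₀ / 4 * X + -(c₀ ^ 2 / 16) * T) :=
    mul_le_mul_of_nonneg_left (exp_le_exp.2 (by nlinarith)) hB₀
  have hδ : ε / (3 * T) * (t - (t - T)) = ε / 3 := by field_simp; ring
  linarith

/-- Quarter-plane comparison with the exponential barrier: a bounded entire
solution of the drift heat equation `v̂_t = v̂_xx + c(t) v̂_x` on `x ≥ 0`,
with drift `c(t) ≥ c₀/2 > 0`, boundary value `v̂(t,0) ≤ 1` and uniform decay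
as `x → ∞`, satisfies `v̂(t,x) ≤ e^{-(c₀/2) x}`. -/
theorem stmt_17 (θ c₀ : ℝ) (hθ : θ ∈ Set.Ioo (0 : ℝ) 1) (hc₀ : 0 < c₀)
    (v : ℝ → ℝ → ℝ) (vt vx vxx : ℝ → ℝ → ℝ) (c : ℝ → ℝ) (L : NNReal)
    (hccont : Continuous c) (hclip : LipschitzWith L c)
    (hclow : ∀ t : ℝ, c₀ / 2 ≤ c t)
    (hvt : ∀ t x : ℝ, 0 ≤ x → HasDerivAt (fun τ => v τ x) (vt t x) t)
    (hvx : ∀ t x : ℝ, 0 ≤ x → HasDerivAt (fun y => v t y) (vx t x) x)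
    (hvxx : ∀ t x : ℝ, 0 ≤ x → HasDerivAt (fun y => vx t y) (vxx t x) x)
    (hpde : ∀ t x : ℝ, 0 ≤ x → vt t x = vxx t x + c t * vx t x)
    (hbdd : ∃ B : ℝ, ∀ t x : ℝ, 0 ≤ x → |v t x| ≤ B)
    (hvxbdd : ∃ B' : ℝ, ∀ t x : ℝ, 0 ≤ x → |vx t x| ≤ B')
    (hbc : ∀ t : ℝ, v t 0 ≤ 1)
    (hdecay : ∀ ε : ℝ, 0 < ε → ∃ M : ℝ, ∀ t x : ℝ, M ≤ x → |v t x| ≤ ε) :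
    ∀ t x : ℝ, 0 ≤ x → v t x ≤ Real.exp (-(c₀ / 2) * x) :=
  stmt_17_general c₀ hc₀ v vt vx vxx c hclow hvt hvx hvxx hpde hbdd hvxbdd hbc hdecay
end
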